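/- Any unit grid intersection graph on n vertices admits a representation inside the grid square [−1, n] × [−1, n] (i.e., of side length n+1) in which all segment endpoint coordinates are multiples of 1/n, and with respect to each axis no two segments of the same orientation have the same coordinate. -/

import Mathlib

/-!
Adjacency only involves a horizontal and a vertical segment, and along each axis it says that a
point `b` (the line of one segment) lies in a unit interval `[a, a + 1]` (the extent of the other).
So it suffices to move, axis by axis, finitely many unit intervals and points without changing
which point lies in which interval.

First snap: replace every coordinate `c` by `⌊c⌋ + r / n`, where `r < n` ranks the fractional
parts. Comparisons `a ≤ b` and `b ≤ a + 1` only depend on the integer parts and on the order of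
the fractional parts, so with suitable tie-breaking all incidences survive, and the new
coordinates are distinct multiples of `1 / n`.

Then compress: list all points and interval endpoints in increasing order, keep every gap that lies
inside one of the unit intervals and shrink every other gap to `1 / n`. Intervals keep length one,
the order is unchanged, and starting at `-1` the total length is at most
`(number of intervals) + n · (1 / n) ≤ n + 1`.
-/

open Set

/-- The closed horizontal unit segment with left endpoint `p`. -/
def hseg (p : ℝ × ℝ) : Set (ℝ × ℝ) := {q | q.2 = p.2 ∧ q.1 ∈ Set.Icc p.1 (p.1 + 1)}

/-- The closed vertical unit segment with bottom endpoint `p`. -/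
def vseg (p : ℝ × ℝ) : Set (ℝ × ℝ) := {q | q.1 = p.1 ∧ q.2 ∈ Set.Icc p.2 (p.2 + 1)}

/-- The unit axis-parallel segment with endpoint `p`, horizontal if `h = true`. -/
def useg (h : Bool) (p : ℝ × ℝ) : Set (ℝ × ℝ) := if h then hseg p else vseg p

/-- A unit grid intersection representation of a graph `G`: every vertex is assigned a
unit axis-parallel segment, segments of the same orientation are pairwise disjoint, and
two distinct vertices are adjacent iff their segments intersect. -/
structure UGIGRep {V : Type*} (G : SimpleGraph V) where
  horiz : V → Bool
  base : V → ℝ × ℝ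
  same_disj : ∀ u v : V, u ≠ v → horiz u = horiz v →
    Disjoint (useg (horiz u) (base u)) (useg (horiz v) (base v))
  adj_iff : ∀ u v : V, u ≠ v →
    (G.Adj u v ↔ (useg (horiz u) (base u) ∩ useg (horiz v) (base v)).Nonempty)

/-- A graph is a unit grid intersection graph if it has a UGIG representation. -/
def IsUGIG {V : Type*} (G : SimpleGraph V) : Prop := Nonempty (UGIGRep G)

open Finset

section Floor

variable {R : Type*} [Ring R] [LinearOrder R] [IsStrictOrderedRing R] [FloorRing R]

theorem le_iff_floor_lt_or_floor_eq_and_fract_le (x y : R) :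
    x ≤ y ↔ ⌊x⌋ < ⌊y⌋ ∨ ⌊x⌋ = ⌊y⌋ ∧ Int.fract x ≤ Int.fract y := by
  constructor
  · intro hxy
    rcases (Int.floor_le_floor hxy).lt_or_eq with hlt | heq
    · exact Or.inl hlt
    · refine Or.inr ⟨heq, ?_⟩
      rw [Int.fract, Int.fract, heq]
      exact sub_le_sub_right hxy _
  · rintro (hlt | ⟨heq, hle⟩)
    · calc x ≤ ⌊x⌋ + 1 := (Int.lt_floor_add_one x).le
        _ ≤ ⌊y⌋ := mod_cast hlt
        _ ≤ y := Int.floor_le y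
    · rw [← Int.floor_add_fract x, ← Int.floor_add_fract y, heq]
      exact add_le_add_right hle _

theorem le_iff_le_of_floor_eq {x y x' y' : R} (hx : ⌊x⌋ = ⌊x'⌋) (hy : ⌊y⌋ = ⌊y'⌋)
    (hfract : ⌊x⌋ = ⌊y⌋ →
      (Int.fract x ≤ Int.fract y ↔ Int.fract x' ≤ Int.fract y')) :
    x ≤ y ↔ x' ≤ y' := by
  rw [le_iff_floor_lt_or_floor_eq_and_fract_le x, le_iff_floor_lt_or_floor_eq_and_fract_le x',
    ← hx, ← hy]
  exact or_congr_right (and_congr_right hfract)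

theorem floor_intCast_add_div_eq_and_fract {K : Type*} [Field K] [LinearOrder K]
    [IsStrictOrderedRing K] [FloorRing K] {k : ℤ} {r n : ℕ} (h : r < n) :
    ⌊(k : K) + r / n⌋ = k ∧ Int.fract ((k : K) + r / n) = r / n := by
  have hmem : (r : K) / n ∈ Set.Ico 0 1 :=
    ⟨by positivity, (div_lt_one (mod_cast r.zero_le.trans_lt h)).2 (mod_cast h)⟩
  rw [Int.floor_intCast_add, Int.floor_eq_zero_iff.2 hmem, add_zero, Int.fract_intCast_add,
    Int.fract_eq_self.2 hmem]
  exact ⟨rfl, rfl⟩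

end Floor

theorem Fintype.exists_rank_le_iff {V α : Type*} [Fintype V] [LinearOrder α] (f : V → α) :
    ∃ r : V → ℕ, (∀ v, r v < Fintype.card V) ∧ ∀ u v, r u ≤ r v ↔ f u ≤ f v := by
  classical
  let S := Finset.univ.image f
  let e := S.orderIsoOfFin rfl
  refine ⟨fun v => e.symm ⟨f v, mem_image_of_mem f (mem_univ v)⟩, fun v => ?_,
    fun u v => ?_⟩
  · exact (Fin.is_lt _).trans_le card_image_le
  · rw [← Fin.le_iff_val_le_val, e.symm.le_iff_le, Subtype.mk_le_mk]

theorem Prod.Lex.le_iff_fst_le_of_eq_imp {α β : Type*} [LinearOrder α] [Preorder β] {a b : α}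
    {x y : β} (h : a = b → x ≤ y) : toLex (a, x) ≤ toLex (b, y) ↔ a ≤ b := by
  rw [Prod.Lex.toLex_le_toLex, le_iff_lt_or_eq]
  exact ⟨fun h' => h'.imp_right And.left, fun h' => h'.imp_right fun hab => ⟨hab, h hab⟩⟩

noncomputable def grid (n : ℕ) : AddSubgroup ℝ := AddSubgroup.zmultiples ((n : ℝ)⁻¹)

theorem mem_grid_iff {n : ℕ} {x : ℝ} : x ∈ grid n ↔ ∃ k : ℤ, x = k / n := by
  simp only [grid, AddSubgroup.mem_zmultiples_iff, zsmul_eq_mul, div_eq_mul_inv, eq_comm]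

theorem inv_mem_grid (n : ℕ) : (n : ℝ)⁻¹ ∈ grid n := AddSubgroup.mem_zmultiples _

theorem one_mem_grid {n : ℕ} (hn : n ≠ 0) : (1 : ℝ) ∈ grid n :=
  mem_grid_iff.2 ⟨n, by push_cast; field_simp⟩

namespace GapCompression

variable (E : Finset ℝ)

-- The successor of `e` in `E`; past the maximum of `E` it is the junk value `e + 1`.
noncomputable def next (e : ℝ) : ℝ :=
  if h : (E.filter (e < ·)).Nonempty then (E.filter (e < ·)).min' h else e + 1

variable {E}

theorem lt_next (e : ℝ) : e < next E e := by
  unfold next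
  split_ifs with h
  · exact (mem_filter.1 (min'_mem _ h)).2
  · exact lt_add_one e

theorem next_le {e x : ℝ} (hx : x ∈ E) (hex : e < x) : next E e ≤ x := by
  have h : (E.filter (e < ·)).Nonempty := ⟨x, mem_filter.2 ⟨hx, hex⟩⟩
  rw [next, dif_pos h]
  exact min'_le _ _ (mem_filter.2 ⟨hx, hex⟩)

theorem next_mem {e x : ℝ} (hx : x ∈ E) (hex : e < x) : next E e ∈ E := by
  have h : (E.filter (e < ·)).Nonempty := ⟨x, mem_filter.2 ⟨hx, hex⟩⟩
  rw [next, dif_pos h]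
  exact (mem_filter.1 (min'_mem _ h)).1

theorem sum_next_sub_self {a b : ℝ} (ha : a ∈ E) (hb : b ∈ E) (hab : a ≤ b) :
    ∑ e ∈ E.filter (fun e => a ≤ e ∧ e < b), (next E e - e) = b - a := by
  induction hN : #(E.filter (fun e => a ≤ e ∧ e < b)) using Nat.strong_induction_on
    generalizing b with
  | _ N ih =>
  rcases hab.eq_or_lt with rfl | hab
  · rw [filter_false_of_mem fun e _ he => he.1.not_gt he.2, sum_empty, sub_self]
  set F := E.filter (fun e => a ≤ e ∧ e < b)
  have hF : F.Nonempty := ⟨a, mem_filter.2 ⟨ha, le_rfl, hab⟩⟩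
  obtain ⟨hb'E, hab', hb'b⟩ : F.max' hF ∈ E ∧ a ≤ F.max' hF ∧ F.max' hF < b := by
    simpa only [F, mem_filter] using F.max'_mem hF
  set b' := F.max' hF
  have hnext : next E b' = b := by
    refine (next_le hb hb'b).antisymm (not_lt.1 fun hlt => (lt_next (E := E) b').not_ge ?_)
    exact F.le_max' _ (mem_filter.2 ⟨next_mem hb hb'b, hab'.trans (lt_next b').le, hlt⟩)
  have hsplit : F = insert b' (E.filter (fun e => a ≤ e ∧ e < b')) := by
    ext e
    simp only [F, Finset.mem_insert, mem_filter]
    constructor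
    · rintro ⟨he, hae, heb⟩
      rcases (F.le_max' e (mem_filter.2 ⟨he, hae, heb⟩)).eq_or_lt with h | h
      · exact Or.inl h
      · exact Or.inr ⟨he, hae, h⟩
    · rintro (rfl | ⟨he, hae, heb'⟩)
      · exact ⟨hb'E, hab', hb'b⟩
      · exact ⟨he, hae, heb'.trans hb'b⟩
  have hb'_notMem : b' ∉ E.filter (fun e => a ≤ e ∧ e < b') := by simp
  have hcard : #(E.filter (fun e => a ≤ e ∧ e < b')) < N := by
    rw [← hN, hsplit, card_insert_of_notMem hb'_notMem]
    exact Nat.lt_succ_self _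
  rw [hsplit, sum_insert hb'_notMem, ih _ hcard hb'E hab' rfl, hnext]
  ring

variable (E) (I : Finset ℝ) (δ : ℝ)

def Covered (e : ℝ) : Prop := ∃ l ∈ I, l ≤ e ∧ next E e ≤ l + 1

open scoped Classical in
noncomputable def gap (e : ℝ) : ℝ := if Covered E I e then next E e - e else δ

noncomputable def compress (t : ℝ) : ℝ := -1 + ∑ e ∈ E.filter (· < t), gap E I δ e

variable {E I δ}

theorem gap_nonneg (hδ : 0 ≤ δ) (e : ℝ) : 0 ≤ gap E I δ e := by
  unfold gap
  split_ifs
  · exact sub_nonneg.2 (lt_next e).le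
  · exact hδ

theorem gap_pos (hδ : 0 < δ) (e : ℝ) : 0 < gap E I δ e := by
  unfold gap
  split_ifs
  · exact sub_pos.2 (lt_next e)
  · exact hδ

theorem compress_sub_compress {s t : ℝ} (hst : s ≤ t) :
    compress E I δ t - compress E I δ s =
      ∑ e ∈ E.filter (fun e => s ≤ e ∧ e < t), gap E I δ e := by
  rw [compress, compress, ← sum_filter_add_sum_filter_not (E.filter (· < t)) (· < s),
    filter_filter, filter_filter]
  have hlow : E.filter (fun e => e < t ∧ e < s) = E.filter (· < s) :=
    filter_congr fun e _ => ⟨And.right, fun h => ⟨h.trans_le hst, h⟩⟩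
  have hmid : E.filter (fun e => e < t ∧ ¬e < s) = E.filter (fun e => s ≤ e ∧ e < t) :=
    filter_congr fun e _ => ⟨fun h => ⟨not_lt.1 h.2, h.1⟩, fun h => ⟨h.2, not_lt.2 h.1⟩⟩
  rw [hlow, hmid]
  ring

theorem strictMonoOn_compress (hδ : 0 < δ) : StrictMonoOn (compress E I δ) E := by
  intro s hs t _ hst
  rw [← sub_pos, compress_sub_compress hst.le]
  exact sum_pos' (fun e _ => gap_nonneg hδ.le e)
    ⟨s, mem_filter.2 ⟨hs, le_rfl, hst⟩, gap_pos hδ s⟩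

theorem compress_add_one {l : ℝ} (hl : l ∈ I) (hlE : l ∈ E) (hl1 : l + 1 ∈ E) :
    compress E I δ (l + 1) = compress E I δ l + 1 := by
  rw [← sub_eq_iff_eq_add', compress_sub_compress (by linarith)]
  have hgap : ∀ e ∈ E.filter (fun e => l ≤ e ∧ e < l + 1), gap E I δ e = next E e - e :=
    fun e he => if_pos ⟨l, hl, (mem_filter.1 he).2.1, next_le hl1 (mem_filter.1 he).2.2⟩
  rw [sum_congr rfl hgap, sum_next_sub_self hlE hl1 (by linarith)]
  ring

theorem compress_mem {A : AddSubgroup ℝ} (hE : ∀ e ∈ E, e ∈ A) (h1 : (1 : ℝ) ∈ A)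
    (hδ : δ ∈ A) (t : ℝ) : compress E I δ t ∈ A := by
  have hnext : ∀ e ∈ E, next E e ∈ A := fun e he => by
    unfold next
    split_ifs with h
    · exact hE _ (mem_filter.1 (min'_mem _ h)).1
    · exact add_mem (hE e he) h1
  refine add_mem (neg_mem h1) (sum_mem fun e he => ?_)
  have he := (mem_filter.1 he).1
  unfold gap
  split_ifs
  · exact sub_mem (hnext e he) (hE e he)
  · exact hδ

theorem neg_one_le_compress (hδ : 0 ≤ δ) (t : ℝ) : -1 ≤ compress E I δ t :=
  le_add_of_nonneg_right (sum_nonneg fun e _ => gap_nonneg hδ e)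

open scoped Classical in
theorem sum_covered_le (hIE : I ⊆ E) (hI1 : ∀ l ∈ I, l + 1 ∈ E) :
    ∑ e ∈ E.filter (Covered E I), (next E e - e) ≤ #I := by
  choose! owner howner using fun e (he : e ∈ E.filter (Covered E I)) => (mem_filter.1 he).2
  rw [← sum_fiberwise_of_maps_to fun e he => (howner e he).1]
  calc ∑ l ∈ I, ∑ e ∈ (E.filter (Covered E I)).filter (owner · = l), (next E e - e)
      ≤ ∑ l ∈ I, ∑ e ∈ E.filter (fun e => l ≤ e ∧ e < l + 1), (next E e - e) := by
        refine sum_le_sum fun l _ => sum_le_sum_of_subset_of_nonneg ?_ fun e _ _ =>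
          sub_nonneg.2 (lt_next e).le
        intro e he
        obtain ⟨hcov, rfl⟩ := mem_filter.1 he
        obtain ⟨-, hle, hnext⟩ := howner e hcov
        exact mem_filter.2 ⟨(mem_filter.1 hcov).1, hle, (lt_next e).trans_le hnext⟩
    _ = ∑ l ∈ I, 1 := sum_congr rfl fun l hl => by
        rw [sum_next_sub_self (hIE hl) (hI1 l hl) (by linarith)]
        ring
    _ = #I := by simp

theorem compress_le (hδ : 0 ≤ δ) (hIE : I ⊆ E) (hI1 : ∀ l ∈ I, l + 1 ∈ E) (t : ℝ) :
    compress E I δ t ≤ -1 + #I + #(E \ I) * δ := by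
  classical
  have huncovered : E.filter (¬Covered E I ·) ⊆ E \ I := fun e he => by
    obtain ⟨he, hnc⟩ := mem_filter.1 he
    exact mem_sdiff.2
      ⟨he, fun heI => hnc ⟨e, heI, le_rfl, next_le (hI1 e heI) (lt_add_one e)⟩⟩
  calc compress E I δ t
      ≤ -1 + ∑ e ∈ E, gap E I δ e := by
        have := sum_le_sum_of_subset_of_nonneg (filter_subset (· < t) E) fun e _ _ =>
          gap_nonneg (E := E) (I := I) hδ e
        unfold compress
        linarith
    _ = -1 + (∑ e ∈ E.filter (Covered E I), (next E e - e) +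
          #(E.filter (¬Covered E I ·)) * δ) := by
        rw [← sum_filter_add_sum_filter_not E (Covered E I)]
        congr 2
        · exact sum_congr rfl fun e he => by rw [gap, if_pos (mem_filter.1 he).2]
        · rw [← nsmul_eq_mul, ← sum_const]
          exact sum_congr rfl fun e he => by rw [gap, if_neg (mem_filter.1 he).2]
    _ ≤ -1 + #I + #(E \ I) * δ := by
        have := sum_covered_le hIE hI1
        have : (#(E.filter (¬Covered E I ·)) : ℝ) ≤ #(E \ I) :=
          mod_cast Finset.card_le_card huncovered
        nlinarith

theorem compress_le_of_card_le {n : ℕ} (hn : n ≠ 0) (hIE : I ⊆ E)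
    (hI1 : ∀ l ∈ I, l + 1 ∈ E) (hI : #I ≤ n) (hEI : #(E \ I) ≤ n) (t : ℝ) :
    compress E I (n : ℝ)⁻¹ t ≤ n := calc
  compress E I (n : ℝ)⁻¹ t ≤ -1 + #I + #(E \ I) * (n : ℝ)⁻¹ :=
    compress_le (by positivity) hIE hI1 t
  _ ≤ -1 + n + n * (n : ℝ)⁻¹ := by gcongr
  _ = n := by rw [mul_inv_cancel₀ (Nat.cast_ne_zero.2 hn)]; ring

end GapCompression

section

variable {V : Type*}

def SameIncidence (o : V → Bool) (c c' : V → ℝ) : Prop :=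
  ∀ u v, o u = true → o v = false →
    (c v ∈ Icc (c u) (c u + 1) ↔ c' v ∈ Icc (c' u) (c' u + 1))

theorem SameIncidence.trans {o : V → Bool} {c c' c'' : V → ℝ}
    (h : SameIncidence o c c') (h' : SameIncidence o c' c'') : SameIncidence o c c'' :=
  fun u v hu hv => (h u v hu hv).trans (h' u v hu hv)

theorem exists_sameIncidence_injective_grid [Fintype V] [Nonempty V] (o : V → Bool)
    (c : V → ℝ) :
    ∃ c' : V → ℝ, (∀ v, c' v ∈ grid (Fintype.card V)) ∧ Function.Injective c' ∧
      SameIncidence o c c' := by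
  set n := Fintype.card V
  have hn : (0 : ℝ) < n := mod_cast Fintype.card_pos
  -- Ties between fractional parts are broken by putting larger coordinates first and, at equal
  -- coordinates, intervals before points; this keeps both `c u ≤ c v` and `c v ≤ c u + 1`.
  let key : V → ℝ ×ₗ ℝ ×ₗ Bool ×ₗ Fin n :=
    fun v => toLex (Int.fract (c v), toLex (-c v, toLex (!o v, Fintype.equivFin V v)))
  have key_inj : Function.Injective key := fun u v h => by
    simpa [key] using congrArg (fun k => (ofLex (ofLex (ofLex k).2).2).2) h
  obtain ⟨r, hr_lt, hr_le⟩ := Fintype.exists_rank_le_iff key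
  let c' v := (⌊c v⌋ : ℝ) + r v / n
  have hfloor v : ⌊c' v⌋ = ⌊c v⌋ := (floor_intCast_add_div_eq_and_fract (hr_lt v)).1
  have hfract_le u v : Int.fract (c' u) ≤ Int.fract (c' v) ↔ key u ≤ key v := by
    rw [(floor_intCast_add_div_eq_and_fract (hr_lt u)).2,
      (floor_intCast_add_div_eq_and_fract (hr_lt v)).2, div_le_div_iff_of_pos_right hn,
      Nat.cast_le, hr_le]
  refine ⟨c', fun v => ?_, fun u v h => ?_, fun u v hu hv => and_congr ?_ ?_⟩
  · exact mem_grid_iff.2 ⟨⌊c v⌋ * n + r v, by simp only [c']; field_simp; push_cast; ring⟩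
  · exact key_inj
      (le_antisymm ((hfract_le u v).1 (h ▸ le_rfl)) ((hfract_le v u).1 (h ▸ le_rfl)))
  · refine le_iff_le_of_floor_eq (hfloor u).symm (hfloor v).symm fun hfl => ?_
    rw [hfract_le]
    refine (Prod.Lex.le_iff_fst_le_of_eq_imp fun htie => ?_).symm
    have hcuv : c u = c v := by rw [← Int.floor_add_fract (c u), hfl, htie, Int.floor_add_fract]
    simp [Prod.Lex.toLex_le_toLex, hcuv, hu, hv]
  · refine le_iff_le_of_floor_eq (hfloor v).symm
      (by rw [Int.floor_add_one, Int.floor_add_one, hfloor]) fun hfl => ?_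
    rw [Int.fract_add_one, Int.fract_add_one, hfract_le]
    refine (Prod.Lex.le_iff_fst_le_of_eq_imp fun htie => ?_).symm
    have hcvu : c v = c u + 1 := by
      rw [← Int.floor_add_fract (c v), hfl, Int.floor_add_one, htie]
      push_cast
      linarith [Int.floor_add_fract (c u)]
    simp [Prod.Lex.toLex_le_toLex, hcvu]

open GapCompression in
theorem exists_sameIncidence_Icc_of_grid [Fintype V] [Nonempty V] (o : V → Bool)
    (c : V → ℝ) (hc : ∀ v, c v ∈ grid (Fintype.card V)) :
    ∃ c' : V → ℝ, (∀ v, c' v ∈ grid (Fintype.card V)) ∧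
      (∀ u v, c' u ≤ c' v ↔ c u ≤ c v) ∧ SameIncidence o c c' ∧
      (∀ v, c' v ∈ Icc (-1) (Fintype.card V : ℝ)) ∧
      ∀ u, o u = true → c' u + 1 ≤ Fintype.card V := by
  classical
  set n := Fintype.card V
  have hn : n ≠ 0 := Fintype.card_ne_zero
  let I := (Finset.univ.filter (o · = true)).image c
  let E := Finset.univ.image c ∪ I.image (· + 1)
  have hcE : ∀ v, c v ∈ E := fun v => mem_union_left _ (mem_image_of_mem c (mem_univ v))
  have hcI : ∀ u, o u = true → c u ∈ I := fun u hu =>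
    mem_image_of_mem c (mem_filter.2 ⟨mem_univ u, hu⟩)
  have hIE : I ⊆ E := fun l hl => by
    obtain ⟨v, -, rfl⟩ := mem_image.1 hl
    exact hcE v
  have hI1 : ∀ l ∈ I, l + 1 ∈ E := fun l hl => mem_union_right _ (mem_image_of_mem _ hl)
  have hE_grid : ∀ e ∈ E, e ∈ grid n := by
    simp only [E, I, Finset.mem_union, Finset.mem_image, mem_filter,
      Finset.mem_univ, true_and]
    rintro _ (⟨v, rfl⟩ | ⟨_, ⟨u, -, rfl⟩, rfl⟩)
    exacts [hc v, add_mem (hc u) (one_mem_grid hn)]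
  have hI_card : #I ≤ n := card_image_le.trans (card_filter_le _ _)
  have hEI_card : #(E \ I) ≤ n := by
    have hE_card : #E ≤ n + #I := (Finset.card_union_le _ _).trans
      (add_le_add (card_image_le.trans (card_univ (α := V)).le) card_image_le)
    rw [card_sdiff_of_subset hIE]
    omega
  set δ := (n : ℝ)⁻¹
  have hδ : 0 < δ := by positivity
  have hbound := compress_le_of_card_le hn hIE hI1 hI_card hEI_card
  have hmono := strictMonoOn_compress (E := E) (I := I) hδ
  have hadd : ∀ u, o u = true → compress E I δ (c u + 1) = compress E I δ (c u) + 1 :=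
    fun u hu => compress_add_one (hcI u hu) (hcE u) (hI1 _ (hcI u hu))
  refine ⟨fun v => compress E I δ (c v), fun v => compress_mem hE_grid (one_mem_grid hn)
    (inv_mem_grid n) _, fun u v => hmono.le_iff_le (hcE u) (hcE v), fun u v hu _ => ?_,
    fun v => ⟨neg_one_le_compress hδ.le _, hbound _⟩, fun u hu => hadd u hu ▸ hbound _⟩
  simp only [Set.mem_Icc]
  rw [← hadd u hu]
  exact and_congr (hmono.le_iff_le (hcE u) (hcE v)).symm
    (hmono.le_iff_le (hcE v) (hI1 _ (hcI u hu))).symm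

theorem exists_sameIncidence_canonical [Fintype V] (o : V → Bool) (c : V → ℝ) :
    ∃ c' : V → ℝ, (∀ v, c' v ∈ grid (Fintype.card V)) ∧ Function.Injective c' ∧
      SameIncidence o c c' ∧ (∀ v, c' v ∈ Icc (-1) (Fintype.card V : ℝ)) ∧
      ∀ u, o u = true → c' u + 1 ≤ Fintype.card V := by
  cases isEmpty_or_nonempty V
  · exact ⟨c, isEmptyElim, fun u => isEmptyElim u, fun u => isEmptyElim u, isEmptyElim,
      fun u => isEmptyElim u⟩
  obtain ⟨c₁, hgrid₁, hinj₁, hinc₁⟩ := exists_sameIncidence_injective_grid o c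
  obtain ⟨c', hgrid, hle, hinc, hbox, hend⟩ := exists_sameIncidence_Icc_of_grid o c₁ hgrid₁
  exact ⟨c', hgrid, fun u v h => hinj₁ (le_antisymm ((hle u v).1 h.le) ((hle v u).1 h.ge)),
    hinc₁.trans hinc, hbox, hend⟩

@[simp] theorem useg_true (p : ℝ × ℝ) : useg true p = hseg p := rfl

@[simp] theorem useg_false (p : ℝ × ℝ) : useg false p = vseg p := rfl

theorem hseg_inter_vseg_nonempty_iff (p q : ℝ × ℝ) :
    (hseg p ∩ vseg q).Nonempty ↔ q.1 ∈ Icc p.1 (p.1 + 1) ∧ p.2 ∈ Icc q.2 (q.2 + 1) := by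
  constructor
  · rintro ⟨z, ⟨hzp, hz1⟩, hzq, hz2⟩
    rw [hzq] at hz1
    rw [hzp] at hz2
    exact ⟨hz1, hz2⟩
  · rintro ⟨h1, h2⟩
    exact ⟨(q.1, p.2), ⟨rfl, h1⟩, rfl, h2⟩

theorem hseg_disjoint {p q : ℝ × ℝ} (h : p.2 ≠ q.2) : Disjoint (hseg p) (hseg q) :=
  Set.disjoint_left.2 fun _ hp hq => h (hp.1.symm.trans hq.1)

theorem vseg_disjoint {p q : ℝ × ℝ} (h : p.1 ≠ q.1) : Disjoint (vseg p) (vseg q) :=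
  Set.disjoint_left.2 fun _ hp hq => h (hp.1.symm.trans hq.1)

theorem useg_subset_Icc_prod {h : Bool} {p : ℝ × ℝ} {a b : ℝ} (h1 : p.1 ∈ Icc a b)
    (h2 : p.2 ∈ Icc a b) (hh : h = true → p.1 + 1 ≤ b) (hv : h = false → p.2 + 1 ≤ b) :
    useg h p ⊆ Icc a b ×ˢ Icc a b := by
  cases h
  · rintro z ⟨hz1, hz2⟩
    exact ⟨hz1 ▸ h1, h2.1.trans hz2.1, hz2.2.trans (hv rfl)⟩
  · rintro z ⟨hz2, hz1⟩
    exact ⟨⟨h1.1.trans hz1.1, hz1.2.trans (hh rfl)⟩, hz2 ▸ h2⟩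

def DistinctLines (horiz : V → Bool) (b : V → ℝ × ℝ) : Prop :=
  ∀ u v, u ≠ v → horiz u = horiz v →
    (horiz u = true → (b u).2 ≠ (b v).2) ∧ (horiz u = false → (b u).1 ≠ (b v).1)

theorem DistinctLines.disjoint {horiz : V → Bool} {b : V → ℝ × ℝ}
    (hb : DistinctLines horiz b) {u v : V} (huv : u ≠ v) (hh : horiz u = horiz v) :
    Disjoint (useg (horiz u) (b u)) (useg (horiz v) (b v)) := by
  rw [← hh]
  cases hu : horiz u
  · exact vseg_disjoint ((hb u v huv hh).2 hu)
  · exact hseg_disjoint ((hb u v huv hh).1 hu)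

def UGIGRep.rebase {G : SimpleGraph V} (R : UGIGRep G) (b : V → ℝ × ℝ)
    (hb : DistinctLines R.horiz b)
    (hinc : ∀ u v, R.horiz u = true → R.horiz v = false →
      ((hseg (b u) ∩ vseg (b v)).Nonempty ↔ (hseg (R.base u) ∩ vseg (R.base v)).Nonempty)) :
    UGIGRep G where
  horiz := R.horiz
  base := b
  same_disj _ _ := hb.disjoint
  adj_iff u v huv := by
    rw [R.adj_iff u v huv]
    by_cases hh : R.horiz u = R.horiz v
    · exact iff_of_false (Set.not_nonempty_iff_eq_empty.2 (R.same_disj u v huv hh).inter_eq)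
        (Set.not_nonempty_iff_eq_empty.2 (hb.disjoint huv hh).inter_eq)
    cases hu : R.horiz u <;> cases hv : R.horiz v
    · exact absurd (hu.trans hv.symm) hh
    · simp only [useg_false, useg_true]
      rw [Set.inter_comm, Set.inter_comm (vseg _)]
      exact (hinc v u hv hu).symm
    · simp only [useg_false, useg_true]
      exact (hinc u v hu hv).symm
    · exact absurd (hu.trans hv.symm) hh

end

/-- Any unit grid intersection graph on `n` vertices admits a representation inside the
square `[-1, n] × [-1, n]` with all endpoint coordinates multiples of `1/n`, in which no
two segments of the same orientation share their line coordinate. -/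
theorem stmt5 {V : Type*} [Fintype V] (G : SimpleGraph V) (h : IsUGIG G) :
    ∃ R : UGIGRep G,
      (∀ v : V, (∃ k : ℤ, (R.base v).1 = (k : ℝ) / (Fintype.card V : ℝ)) ∧
                 (∃ k : ℤ, (R.base v).2 = (k : ℝ) / (Fintype.card V : ℝ))) ∧
      (∀ v : V, useg (R.horiz v) (R.base v) ⊆
        Set.Icc (-1 : ℝ) (Fintype.card V : ℝ) ×ˢ Set.Icc (-1 : ℝ) (Fintype.card V : ℝ)) ∧
      (∀ u v : V, u ≠ v → R.horiz u = R.horiz v →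
        (R.horiz u = true → (R.base u).2 ≠ (R.base v).2) ∧
        (R.horiz u = false → (R.base u).1 ≠ (R.base v).1)) := by
  obtain ⟨R⟩ := h
  obtain ⟨x, hx_grid, hx_inj, hx_inc, hx_box, hx_end⟩ :=
    exists_sameIncidence_canonical R.horiz fun v => (R.base v).1
  obtain ⟨y, hy_grid, hy_inj, hy_inc, hy_box, hy_end⟩ :=
    exists_sameIncidence_canonical (fun v => !R.horiz v) fun v => (R.base v).2
  have hlines : DistinctLines R.horiz fun v => (x v, y v) :=
    fun u v huv _ => ⟨fun _ h => huv (hy_inj h), fun _ h => huv (hx_inj h)⟩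
  refine ⟨R.rebase _ hlines fun u v hu hv => ?_,
    fun v => ⟨mem_grid_iff.1 (hx_grid v), mem_grid_iff.1 (hy_grid v)⟩,
    fun v => useg_subset_Icc_prod (hx_box v) (hy_box v) (hx_end v)
      fun hv => hy_end v (by simp only [Bool.not_eq_true']; exact hv), hlines⟩
  rw [hseg_inter_vseg_nonempty_iff, hseg_inter_vseg_nonempty_iff]
  exact and_congr (hx_inc u v hu hv).symm (hy_inc v u (by simp [hv]) (by simp [hu])).symm
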